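/- arXiv:1006.1413 — 5 statements merged into one kernel-verified Lean document; each statement's English description precedes it below -/
import Mathlib

section
/- If τ is an object type such that τ ≤ σ holds and v ∈ τ holds, then there exists an object type τ′ (not necessarily equal to τ) such that v ∈ τ′ holds, and such that there exists a contractive derivation of τ′ ≤ σ whose first (root) applied rule is (∨R1), (∨R2) or (obj). -/
/-! ## Possibly infinite types and values, coinductively defined as M-types -/

/-- Shapes of type constructors: `int`, object types (class name plus finite
set of field names), and binary union. -/
inductive TyShape : Type where
  | int : TyShape
  | obj : String → Finset String → TyShape
  | union : TyShape

/-- Children (immediate subterms) of each shape. -/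
def TyChild : TyShape → Type
  | .int => Empty
  | .obj _ fs => {f : String // f ∈ fs}
  | .union => Bool

/-- The polynomial functor whose final coalgebra is the set of types. -/
def TyP : PFunctor := ⟨TyShape, TyChild⟩

/-- Possibly infinite types, coinductively generated by
`τ ::= int | obj C [f₁:τ₁,…,fₙ:τₙ] | τ₁ ∨ τ₂`. -/
def Ty : Type := TyP.M

/-- The type `int`. -/
def Ty.int : Ty := PFunctor.M.mk ⟨TyShape.int, Empty.elim⟩

/-- The union type `τ₁ ∨ τ₂`. -/
def Ty.union (t1 t2 : Ty) : Ty :=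
  PFunctor.M.mk ⟨TyShape.union, fun b => cond b t1 t2⟩

/-- The object type `obj C [f:τ_f  |  f ∈ fs]`. -/
def Ty.obj (c : String) (fs : Finset String) (ch : {f : String // f ∈ fs} → Ty) : Ty :=
  PFunctor.M.mk ⟨TyShape.obj c fs, ch⟩

/-- Object type with no fields. -/
def Ty.obj0 (c : String) : Ty :=
  Ty.obj c ∅ (fun f => absurd f.2 (Finset.notMem_empty f.1))

/-- Object type with a single field. -/
def Ty.obj1 (c f : String) (t : Ty) : Ty :=
  Ty.obj c {f} (fun _ => t)

/-- Object type with two (distinct) fields. -/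
def Ty.obj2 (c f1 f2 : String) (t1 t2 : Ty) : Ty :=
  Ty.obj c {f1, f2} (fun g => if g.1 = f1 then t1 else t2)

/-- Shapes of values: integers and objects. -/
inductive ValShape : Type where
  | int : ℤ → ValShape
  | obj : String → Finset String → ValShape

/-- Children of each value shape. -/
def ValChild : ValShape → Type
  | .int _ => Empty
  | .obj _ fs => {f : String // f ∈ fs}

/-- The polynomial functor whose final coalgebra is the set of values. -/
def ValP : PFunctor := ⟨ValShape, ValChild⟩

/-- Possibly infinite values, coinductively generated by
`v ::= i | obj C [f₁↦v₁,…,fₙ↦vₙ]`. -/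
def Val : Type := ValP.M

/-- The integer value `i`. -/
def Val.int (i : ℤ) : Val := PFunctor.M.mk ⟨ValShape.int i, Empty.elim⟩

/-- The object value `obj C [f ↦ v_f | f ∈ fs]`. -/
def Val.obj (c : String) (fs : Finset String) (ch : {f : String // f ∈ fs} → Val) : Val :=
  PFunctor.M.mk ⟨ValShape.obj c fs, ch⟩

/-- Object value with a single field. -/
def Val.obj1 (c f : String) (v : Val) : Val :=
  Val.obj c {f} (fun _ => v)

/-! ## Subtyping

A contractive derivation is a possibly infinite derivation with no
sub-derivation built only with rules (∨R1) and (∨R2); equivalently, the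
premises of (∨R1) and (∨R2) are interpreted inductively (within a layer),
while the premises of all other rules are interpreted coinductively (they
refer to the greatest fixed point `Subty`). -/

/-- One inductive layer of the subtyping rules: premises of (∨R1)/(∨R2) are
inductive occurrences (so only finitely many consecutive applications of
these rules are possible, i.e. derivations are contractive), premises of all
other rules are occurrences of the coinductively-interpreted relation `R`. -/
inductive SubStep (R : Ty → Ty → Prop) : Ty → Ty → Prop where
  | int : SubStep R Ty.int Ty.int
  | unionR1 {t t1 t2 : Ty} : SubStep R t t1 → SubStep R t (Ty.union t1 t2)
  | unionR2 {t t1 t2 : Ty} : SubStep R t t2 → SubStep R t (Ty.union t1 t2)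
  | unionL {t1 t2 t : Ty} : R t1 t → R t2 t → SubStep R (Ty.union t1 t2) t
  | obj {c : String} {fs fs' : Finset String} (hsub : fs' ⊆ fs)
      {ch : {f : String // f ∈ fs} → Ty} {ch' : {f : String // f ∈ fs'} → Ty} :
      (∀ (f : String) (h : f ∈ fs'), R (ch ⟨f, hsub h⟩) (ch' ⟨f, h⟩)) →
      SubStep R (Ty.obj c fs ch) (Ty.obj c fs' ch')
  | distr {c : String} {fs : Finset String} {ch : {f : String // f ∈ fs} → Ty}
      {f : String} (hf : f ∈ fs) {s1 s2 t : Ty} :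
      ch ⟨f, hf⟩ = Ty.union s1 s2 →
      R (Ty.obj c fs (fun g => if g.1 = f then s1 else ch g)) t →
      R (Ty.obj c fs (fun g => if g.1 = f then s2 else ch g)) t →
      SubStep R (Ty.obj c fs ch) t

/-- The subtyping relation `τ ≤ τ′`: greatest fixed point of `SubStep`,
i.e. existence of a contractive, possibly infinite derivation. -/
def Subty (t1 t2 : Ty) : Prop :=
  ∃ R : Ty → Ty → Prop, (∀ x y, R x y → SubStep R x y) ∧ R t1 t2

/-! ## Membership of values in types -/

/-- One inductive layer of the membership rules: premises of (∨L)/(∨R) are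
inductive (contractiveness), premises of (obj) are coinductive. -/
inductive MemStep (R : Val → Ty → Prop) : Val → Ty → Prop where
  | int (i : ℤ) : MemStep R (Val.int i) Ty.int
  | unionL {v : Val} {t1 t2 : Ty} : MemStep R v t1 → MemStep R v (Ty.union t1 t2)
  | unionR {v : Val} {t1 t2 : Ty} : MemStep R v t2 → MemStep R v (Ty.union t1 t2)
  | obj {c : String} {gs fs : Finset String} (hsub : fs ⊆ gs)
      {vch : {f : String // f ∈ gs} → Val} {ch : {f : String // f ∈ fs} → Ty} :
      (∀ (f : String) (h : f ∈ fs), R (vch ⟨f, hsub h⟩) (ch ⟨f, h⟩)) →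
      MemStep R (Val.obj c gs vch) (Ty.obj c fs ch)

/-- The membership relation `v ∈ τ`: greatest fixed point of `MemStep`,
i.e. existence of a contractive, possibly infinite derivation. -/
def MemVal (v : Val) (t : Ty) : Prop :=
  ∃ R : Val → Ty → Prop, (∀ w s, R w s → MemStep R w s) ∧ R v t

/-! ## The non-emptiness predicate `↑τ` -/

/-- One inductive layer of the non-emptiness rules: premises of (↑∨L)/(↑∨R)
are inductive (contractiveness), premises of (↑obj) are coinductive. -/
inductive NEStep (R : Ty → Prop) : Ty → Prop where
  | int : NEStep R Ty.int
  | unionL {t1 t2 : Ty} : NEStep R t1 → NEStep R (Ty.union t1 t2)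
  | unionR {t1 t2 : Ty} : NEStep R t2 → NEStep R (Ty.union t1 t2)
  | obj {c : String} {fs : Finset String} {ch : {f : String // f ∈ fs} → Ty} :
      (∀ (f : String) (h : f ∈ fs), R (ch ⟨f, h⟩)) →
      NEStep R (Ty.obj c fs ch)

/-- The non-emptiness predicate `↑τ`: greatest fixed point of `NEStep`. -/
def NotEmpty (t : Ty) : Prop :=
  ∃ R : Ty → Prop, (∀ s, R s → NEStep R s) ∧ R t

/-- There is a contractive derivation of `t ≤ s` whose first (root) applied
rule is (∨R1), (∨R2) or (obj). -/
def SubtyHeadUnionROrObj (t s : Ty) : Prop :=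
  (∃ s1 s2 : Ty, s = Ty.union s1 s2 ∧ (Subty t s1 ∨ Subty t s2)) ∨
  (∃ (c : String) (fs fs' : Finset String) (hsub : fs' ⊆ fs)
      (ch : {f : String // f ∈ fs} → Ty) (ch' : {f : String // f ∈ fs'} → Ty),
      t = Ty.obj c fs ch ∧ s = Ty.obj c fs' ch' ∧
      ∀ (f : String) (h : f ∈ fs'), Subty (ch ⟨f, hsub h⟩) (ch' ⟨f, h⟩))

/-!
A derivation of `v ∈ τ` that ends in a union type begins with finitely many (∨L)/(∨R) steps,
by contractiveness. For an object type `obj C [fᵢ:τᵢ]`, sum these counts over the fields.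
The root rule of `obj C [fᵢ:τᵢ] ≤ σ` is (∨R1), (∨R2), (obj) or (distr). In the first three
cases we are done; a (distr) step on a field `τᵢ = σ₁ ∨ σ₂` has premises with `τᵢ` replaced
by `σ₁` and by `σ₂`, and the membership derivation of the field value passes through one of
these with one union step fewer. So the count strictly decreases and the recursion ends.
-/

namespace Ty

theorem obj_injective {c c' : String} {fs fs' : Finset String}
    {ch : {f : String // f ∈ fs} → Ty} {ch' : {f : String // f ∈ fs'} → Ty}
    (h : Ty.obj c fs ch = Ty.obj c' fs' ch') : c = c' ∧ fs = fs' ∧ HEq ch ch' := by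
  have h' := PFunctor.M.mk_inj h
  injection h' with hshape hch
  injection hshape with hc hfs
  exact ⟨hc, hfs, hch⟩

theorem obj_ne_int {c : String} {fs : Finset String} {ch : {f : String // f ∈ fs} → Ty} :
    Ty.obj c fs ch ≠ Ty.int :=
  fun h => nomatch congrArg (fun t : Ty => (PFunctor.M.dest t).1) h

theorem obj_ne_union {c : String} {fs : Finset String} {ch : {f : String // f ∈ fs} → Ty}
    {t1 t2 : Ty} : Ty.obj c fs ch ≠ Ty.union t1 t2 :=
  fun h => nomatch congrArg (fun t : Ty => (PFunctor.M.dest t).1) h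

theorem int_ne_union {t1 t2 : Ty} : Ty.int ≠ Ty.union t1 t2 :=
  fun h => nomatch congrArg (fun t : Ty => (PFunctor.M.dest t).1) h

theorem union_injective {t1 t2 s1 s2 : Ty} (h : Ty.union t1 t2 = Ty.union s1 s2) :
    t1 = s1 ∧ t2 = s2 := by
  have h' := PFunctor.M.mk_inj h
  injection h' with _ hch
  exact ⟨congrFun hch true, congrFun hch false⟩

theorem update_eq_ite {fs : Finset String} (ch : {f : String // f ∈ fs} → Ty) {f : String}
    (hf : f ∈ fs) (s : Ty) :
    Function.update ch ⟨f, hf⟩ s = fun g => if g.1 = f then s else ch g := by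
  funext g
  simp only [Function.update_apply, Subtype.ext_iff]

end Ty

theorem SubStep.mono {R R' : Ty → Ty → Prop} (h : ∀ x y, R x y → R' x y) {t s : Ty}
    (hs : SubStep R t s) : SubStep R' t s := by
  induction hs with
  | int => exact .int
  | unionR1 _ ih => exact .unionR1 ih
  | unionR2 _ ih => exact .unionR2 ih
  | unionL h1 h2 => exact .unionL (h _ _ h1) (h _ _ h2)
  | obj hsub hch => exact .obj hsub fun f hf => h _ _ (hch f hf)
  | distr hf he h1 h2 => exact .distr hf he (h _ _ h1) (h _ _ h2)

theorem MemStep.mono {R R' : Val → Ty → Prop} (h : ∀ w t, R w t → R' w t) {v : Val} {t : Ty}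
    (hm : MemStep R v t) : MemStep R' v t := by
  induction hm with
  | int i => exact .int i
  | unionL _ ih => exact .unionL ih
  | unionR _ ih => exact .unionR ih
  | obj hsub hch => exact .obj hsub fun f hf => h _ _ (hch f hf)

namespace Subty

theorem unfold {t s : Ty} (h : Subty t s) : SubStep Subty t s :=
  let ⟨R, hR, hts⟩ := h
  (hR t s hts).mono fun _ _ hxy => ⟨R, hR, hxy⟩

theorem of_step {t s : Ty} (h : SubStep Subty t s) : Subty t s :=
  ⟨SubStep Subty, fun _ _ h => h.mono fun _ _ => unfold, h⟩

theorem obj_inv {c : String} {fs : Finset String} {ch : {f : String // f ∈ fs} → Ty} {σ : Ty}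
    (h : Subty (Ty.obj c fs ch) σ) :
    SubtyHeadUnionROrObj (Ty.obj c fs ch) σ ∨
      ∃ (f : {f : String // f ∈ fs}) (s1 s2 : Ty), ch f = Ty.union s1 s2 ∧
        Subty (Ty.obj c fs (Function.update ch f s1)) σ ∧
        Subty (Ty.obj c fs (Function.update ch f s2)) σ := by
  generalize ht : Ty.obj c fs ch = t at h
  cases h.unfold with
  | int => exact absurd ht Ty.obj_ne_int
  | unionL => exact absurd ht Ty.obj_ne_union
  | unionR1 h1 => subst ht; exact .inl (.inl ⟨_, _, rfl, .inl (of_step h1)⟩)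
  | unionR2 h2 => subst ht; exact .inl (.inl ⟨_, _, rfl, .inr (of_step h2)⟩)
  | obj hsub hch =>
    obtain ⟨rfl, rfl, hch'⟩ := Ty.obj_injective ht
    cases hch'
    exact .inl (.inr ⟨_, _, _, hsub, _, _, rfl, rfl, hch⟩)
  | distr hf hunion h1 h2 =>
    obtain ⟨rfl, rfl, hch'⟩ := Ty.obj_injective ht
    cases hch'
    refine .inr ⟨⟨_, hf⟩, _, _, hunion, ?_, ?_⟩ <;> rwa [Ty.update_eq_ite]

end Subty

namespace MemVal

theorem unfold {v : Val} {t : Ty} (h : MemVal v t) : MemStep MemVal v t :=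
  let ⟨R, hR, hvt⟩ := h
  (hR v t hvt).mono fun _ _ hws => ⟨R, hR, hws⟩

theorem of_step {v : Val} {t : Ty} (h : MemStep MemVal v t) : MemVal v t :=
  ⟨MemStep MemVal, fun _ _ h => h.mono fun _ _ => unfold, h⟩

theorem obj {c : String} {gs fs : Finset String} (hsub : fs ⊆ gs)
    {vch : {f : String // f ∈ gs} → Val} {ch : {f : String // f ∈ fs} → Ty}
    (h : ∀ g : {f : String // f ∈ fs}, MemVal (vch ⟨g.1, hsub g.2⟩) (ch g)) :
    MemVal (Val.obj c gs vch) (Ty.obj c fs ch) :=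
  of_step (.obj hsub fun f hf => h ⟨f, hf⟩)

theorem obj_inv {v : Val} {c : String} {fs : Finset String} {ch : {f : String // f ∈ fs} → Ty}
    (h : MemVal v (Ty.obj c fs ch)) :
    ∃ (gs : Finset String) (vch : {f : String // f ∈ gs} → Val) (hsub : fs ⊆ gs),
      v = Val.obj c gs vch ∧
        ∀ g : {f : String // f ∈ fs}, MemVal (vch ⟨g.1, hsub g.2⟩) (ch g) := by
  generalize ht : Ty.obj c fs ch = t at h
  cases h.unfold with
  | int => exact absurd ht Ty.obj_ne_int
  | unionL => exact absurd ht Ty.obj_ne_union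
  | unionR => exact absurd ht Ty.obj_ne_union
  | obj hsub hch =>
    obtain ⟨rfl, rfl, hch'⟩ := Ty.obj_injective ht
    cases hch'
    exact ⟨_, _, hsub, rfl, fun g => hch g.1 g.2⟩

end MemVal

/-- `MemStep` with the number `n` of its leading (∨L)/(∨R) rules. -/
inductive MemStepDepth (R : Val → Ty → Prop) : Val → Ty → ℕ → Prop where
  | int (i : ℤ) : MemStepDepth R (Val.int i) Ty.int 0
  | unionL {v : Val} {t1 t2 : Ty} {n : ℕ} :
      MemStepDepth R v t1 n → MemStepDepth R v (Ty.union t1 t2) (n + 1)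
  | unionR {v : Val} {t1 t2 : Ty} {n : ℕ} :
      MemStepDepth R v t2 n → MemStepDepth R v (Ty.union t1 t2) (n + 1)
  | obj {c : String} {gs fs : Finset String} (hsub : fs ⊆ gs)
      {vch : {f : String // f ∈ gs} → Val} {ch : {f : String // f ∈ fs} → Ty} :
      (∀ (f : String) (h : f ∈ fs), R (vch ⟨f, hsub h⟩) (ch ⟨f, h⟩)) →
      MemStepDepth R (Val.obj c gs vch) (Ty.obj c fs ch) 0

namespace MemStepDepth

variable {R : Val → Ty → Prop} {v : Val}

theorem memStep {t : Ty} {n : ℕ} (h : MemStepDepth R v t n) : MemStep R v t := by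
  induction h with
  | int i => exact .int i
  | unionL _ ih => exact .unionL ih
  | unionR _ ih => exact .unionR ih
  | obj hsub hch => exact .obj hsub hch

theorem union_inv {t1 t2 : Ty} {n : ℕ} (h : MemStepDepth R v (Ty.union t1 t2) n) :
    ∃ m < n, MemStepDepth R v t1 m ∨ MemStepDepth R v t2 m := by
  generalize ht : Ty.union t1 t2 = t at h
  cases h with
  | int => exact absurd ht.symm Ty.int_ne_union
  | obj => exact absurd ht.symm Ty.obj_ne_union
  | unionL h1 =>
    obtain ⟨rfl, rfl⟩ := Ty.union_injective ht
    exact ⟨_, Nat.lt_succ_self _, .inl h1⟩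
  | unionR h2 =>
    obtain ⟨rfl, rfl⟩ := Ty.union_injective ht
    exact ⟨_, Nat.lt_succ_self _, .inr h2⟩

end MemStepDepth

theorem MemStep.exists_depth {R : Val → Ty → Prop} {v : Val} {t : Ty} (h : MemStep R v t) :
    ∃ n, MemStepDepth R v t n := by
  induction h with
  | int i => exact ⟨0, .int i⟩
  | unionL _ ih => obtain ⟨n, hn⟩ := ih; exact ⟨n + 1, .unionL hn⟩
  | unionR _ ih => obtain ⟨n, hn⟩ := ih; exact ⟨n + 1, .unionR hn⟩
  | obj hsub hch => exact ⟨0, .obj hsub hch⟩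

theorem Finset.sum_update_lt {ι : Type*} [Fintype ι] [DecidableEq ι] (d : ι → ℕ) {i : ι} {m : ℕ}
    (hm : m < d i) : ∑ j, Function.update d i m j < ∑ j, d j := by
  rw [Finset.sum_update_of_mem (Finset.mem_univ i),
    Finset.sum_eq_add_sum_sdiff_singleton_of_mem (Finset.mem_univ i)]
  omega

theorem exists_subtyHead_of_memStepDepth {c : String} {gs fs : Finset String} (hsub : fs ⊆ gs)
    (vch : {f : String // f ∈ gs} → Val) {σ : Ty} (ch : {f : String // f ∈ fs} → Ty)
    (d : {f : String // f ∈ fs} → ℕ) (hσ : Subty (Ty.obj c fs ch) σ)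
    (hmem : ∀ g : {f : String // f ∈ fs},
      MemStepDepth MemVal (vch ⟨g.1, hsub g.2⟩) (ch g) (d g)) :
    ∃ ch' : {f : String // f ∈ fs} → Ty,
      (∀ g : {f : String // f ∈ fs}, MemVal (vch ⟨g.1, hsub g.2⟩) (ch' g)) ∧
      SubtyHeadUnionROrObj (Ty.obj c fs ch') σ := by
  rcases hσ.obj_inv with hhead | ⟨f, s1, s2, hunion, h1, h2⟩
  · exact ⟨ch, fun g => .of_step (hmem g).memStep, hhead⟩
  obtain ⟨s, m, hs, hmf, hlt⟩ : ∃ s m, Subty (Ty.obj c fs (Function.update ch f s)) σ ∧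
      MemStepDepth MemVal (vch ⟨f, hsub f.2⟩) s m ∧ m < d f := by
    obtain ⟨m, hlt, hm1 | hm2⟩ := (hunion ▸ hmem f).union_inv
    exacts [⟨s1, m, h1, hm1, hlt⟩, ⟨s2, m, h2, hm2, hlt⟩]
  have hmem' : ∀ g : {f : String // f ∈ fs}, MemStepDepth MemVal (vch ⟨g.1, hsub g.2⟩)
      (Function.update ch f s g) (Function.update d f m g) := by
    intro g
    rcases eq_or_ne g f with rfl | hne
    · simpa only [Function.update_self] using hmf
    · simpa only [Function.update_of_ne hne] using hmem g
  exact exists_subtyHead_of_memStepDepth hsub vch _ _ hs hmem'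
termination_by ∑ g, d g
decreasing_by exact Finset.sum_update_lt d hlt

/-- If `τ` is an object type with `τ ≤ σ` and `v ∈ τ`, then there is an object
type `τ′` with `v ∈ τ′` and a contractive derivation of `τ′ ≤ σ` whose first
applied rule is (∨R1), (∨R2) or (obj). -/
theorem object_subtype_mem_head (c : String) (fs : Finset String)
    (ch : {f : String // f ∈ fs} → Ty) (σ : Ty) (v : Val)
    (hsub : Subty (Ty.obj c fs ch) σ) (hmem : MemVal v (Ty.obj c fs ch)) :
    ∃ (c' : String) (fs' : Finset String) (ch' : {f : String // f ∈ fs'} → Ty),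
      MemVal v (Ty.obj c' fs' ch') ∧ SubtyHeadUnionROrObj (Ty.obj c' fs' ch') σ := by
  obtain ⟨gs, vch, hfs, rfl, hfields⟩ := hmem.obj_inv
  choose d hd using fun g => (hfields g).unfold.exists_depth
  obtain ⟨ch', hmem', hhead⟩ := exists_subtyHead_of_memStepDepth hfs vch ch d hsub hd
  exact ⟨c, fs, ch', .obj hfs hmem', hhead⟩
end

section
/- For every type τ, if ↑τ holds, then ⟦τ⟧ ≠ ∅, i.e., there exists a value v with v ∈ τ. -/
/- A non-emptiness derivation is read as a recipe for a value: (↑int) produces `0`, (↑∨L)/(↑∨R)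
choose a branch, and (↑obj) produces an object with exactly the declared fields, whose field
values are produced corecursively from the premises. Contractiveness makes every branch choice
finite, so each corecursive step emits a value constructor, and the resulting value satisfies the
membership rules layer by layer. -/

section Witness

variable {R : Ty → Prop}

/- `x` is the top constructor of the witness value; its children are labelled by the types their
values must belong to. -/
theorem NEStep.exists_valHead {t : Ty} (h : NEStep R t) :
    ∃ x : ValP (Subtype R), ∀ (g : Subtype R → Val) (M : Val → Ty → Prop),
      (∀ s, M (g s) s.1) → MemStep M (PFunctor.M.mk (ValP.map g x)) t := by
  induction h with
  | int =>
    refine ⟨⟨ValShape.int 0, Empty.elim⟩, fun g M _ => ?_⟩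
    have hzero : PFunctor.M.mk (ValP.map g ⟨ValShape.int 0, Empty.elim⟩) = Val.int 0 := by
      show PFunctor.M.mk ⟨ValShape.int 0, g ∘ Empty.elim⟩
        = PFunctor.M.mk ⟨ValShape.int 0, Empty.elim⟩
      exact congrArg _ (congrArg _ (funext fun e : Empty => e.elim))
    exact hzero ▸ MemStep.int 0
  | unionL _ ih =>
    obtain ⟨x, hx⟩ := ih
    exact ⟨x, fun g M hg => MemStep.unionL (hx g M hg)⟩
  | unionR _ ih =>
    obtain ⟨x, hx⟩ := ih
    exact ⟨x, fun g M hg => MemStep.unionR (hx g M hg)⟩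
  | @obj c fs ch hch =>
    exact ⟨⟨ValShape.obj c fs, fun f => ⟨ch f, hch f.1 f.2⟩⟩, fun g M hg =>
      MemStep.obj (Finset.Subset.refl fs) fun f hf => hg ⟨ch ⟨f, hf⟩, hch f hf⟩⟩

variable (hR : ∀ s, R s → NEStep R s)

noncomputable def witness : Subtype R → Val :=
  PFunctor.M.corec fun s => Classical.choose (hR s.1 s.2).exists_valHead

theorem memVal_witness (s : Subtype R) : MemVal (witness hR s) s.1 := by
  refine ⟨fun v t => ∃ s : Subtype R, s.1 = t ∧ v = witness hR s, ?_, s, rfl, rfl⟩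
  rintro _ _ ⟨s, rfl, rfl⟩
  rw [witness, PFunctor.M.corec_def]
  exact Classical.choose_spec (hR s.1 s.2).exists_valHead _ _ fun s' => ⟨s', rfl, rfl⟩

end Witness

/-- Soundness of `↑τ`: if `↑τ` holds then `⟦τ⟧ ≠ ∅`. -/
theorem notEmpty_sound (t : Ty) (h : NotEmpty t) : ∃ v : Val, MemVal v t := by
  obtain ⟨R, hR, ht⟩ := h
  exact ⟨witness hR ⟨t, ht⟩, memVal_witness hR ⟨t, ht⟩⟩
end

section
/- Let ⊥ be the regular type satisfying ⊥ = ⊥ ∨ ⊥. Then for every class name C, distinct field names f1, f2, and every type σ, the judgment obj C [f1:⊥, f2:σ] ≤ τ holds for every type τ, via the contractive derivation obtained by applying rule (distr) infinitely many times. -/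
/-- Applying (distr) to the field of type `⊥ = ⊥ ∨ ⊥` yields two premises of the same shape as the
conclusion, so the object types with such a field are below every type by coinduction. -/
theorem subty_obj_of_field_eq_union_self {bot : Ty} (hbot : bot = Ty.union bot bot)
    {c : String} {fs : Finset String} {f : String} (hf : f ∈ fs)
    {ch : {g : String // g ∈ fs} → Ty} (hch : ch ⟨f, hf⟩ = bot) (t : Ty) :
    Subty (Ty.obj c fs ch) t := by
  refine ⟨fun x _ => ∃ ch : {g : String // g ∈ fs} → Ty, x = Ty.obj c fs ch ∧ ch ⟨f, hf⟩ = bot,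
    ?_, ch, rfl, hch⟩
  rintro _ _ ⟨ch, rfl, hch⟩
  have hupdate : ∃ ch' : {g : String // g ∈ fs} → Ty,
      Ty.obj c fs (fun g => if g.1 = f then bot else ch g) = Ty.obj c fs ch' ∧
        ch' ⟨f, hf⟩ = bot := ⟨_, rfl, if_pos rfl⟩
  exact SubStep.distr hf (hch.trans hbot) hupdate hupdate

theorem obj_with_bot_field_subty_all_general (bot : Ty) (hbot : bot = Ty.union bot bot)
    (c f1 f2 : String) (σ : Ty) :
    ∀ t : Ty, Subty (Ty.obj2 c f1 f2 bot σ) t :=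
  subty_obj_of_field_eq_union_self hbot (Finset.mem_insert_self f1 {f2}) (if_pos rfl)

/-- If `⊥` is the regular type with `⊥ = ⊥ ∨ ⊥`, then for every class name
`C`, distinct field names `f1, f2` and type `σ`,
`obj C [f1:⊥, f2:σ] ≤ τ` holds for every type `τ`. -/
theorem obj_with_bot_field_subty_all (bot : Ty) (hbot : bot = Ty.union bot bot)
    (c f1 f2 : String) (hff : f1 ≠ f2) (σ : Ty) :
    ∀ t : Ty, Subty (Ty.obj2 c f1 f2 bot σ) t :=
  obj_with_bot_field_subty_all_general bot hbot c f1 f2 σ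
end

section
/- Let ⊥ be the regular type satisfying ⊥ = ⊥ ∨ ⊥. Then for every class name C and distinct field names f1, f2, the types ⊥ and obj C [f1:⊥, f2:int] are equivalent with respect to subtyping: both ⊥ ≤ obj C [f1:⊥, f2:int] and obj C [f1:⊥, f2:int] ≤ ⊥ hold. -/
/-! The empty type `⊥ = ⊥ ∨ ⊥` is below every type: rule (∨L) reduces `⊥ ≤ τ` to itself,
and this cycle is a contractive derivation. Likewise an object type with a field of type `⊥`
is below every type: rule (distr) on that field reduces the goal to itself. -/

theorem Subty.of_eq_union_self {bot : Ty} (hbot : bot = Ty.union bot bot) (t : Ty) :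
    Subty bot t := by
  refine ⟨fun x _ => x = bot, ?_, rfl⟩
  intro x y hx
  rw [hx]
  have hstep : SubStep (fun x _ => x = bot) (Ty.union bot bot) y := .unionL rfl rfl
  rwa [← hbot] at hstep

theorem Subty.obj_of_field_eq_union_self {bot : Ty} (hbot : bot = Ty.union bot bot)
    {c : String} {fs : Finset String} {ch : {f : String // f ∈ fs} → Ty} {f : String}
    (hf : f ∈ fs) (hch : ch ⟨f, hf⟩ = bot) (t : Ty) : Subty (Ty.obj c fs ch) t := by
  have hupdate : (fun g : {f : String // f ∈ fs} => if g.1 = f then bot else ch g) = ch := by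
    funext ⟨g, hg⟩
    split_ifs with h
    · subst h
      exact hch.symm
    · rfl
  refine ⟨fun x _ => x = Ty.obj c fs ch, ?_, rfl⟩
  rintro x y rfl
  exact .distr hf (hch.trans hbot) (by rw [hupdate]) (by rw [hupdate])

theorem bot_equiv_obj_with_bot_field_general (bot : Ty) (hbot : bot = Ty.union bot bot)
    (c f1 f2 : String) :
    Subty bot (Ty.obj2 c f1 f2 bot Ty.int) ∧ Subty (Ty.obj2 c f1 f2 bot Ty.int) bot :=
  ⟨Subty.of_eq_union_self hbot _,
    Subty.obj_of_field_eq_union_self hbot (Finset.mem_insert_self f1 {f2}) (if_pos rfl) _⟩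

/-- If `⊥` is the regular type with `⊥ = ⊥ ∨ ⊥`, then `⊥` and
`obj C [f1:⊥, f2:int]` are equivalent w.r.t. subtyping. -/
theorem bot_equiv_obj_with_bot_field (bot : Ty) (hbot : bot = Ty.union bot bot)
    (c f1 f2 : String) (hff : f1 ≠ f2) :
    Subty bot (Ty.obj2 c f1 f2 bot Ty.int) ∧ Subty (Ty.obj2 c f1 f2 bot Ty.int) bot :=
  bot_equiv_obj_with_bot_field_general bot hbot c f1 f2
end

section
/- The subtyping relation is reflexive: for every type τ, there is a contractive derivation of τ ≤ τ, hence τ ≤ τ holds. -/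
/-! The relation "`τ = τ′`, or `τ` is a disjunct of the union `τ′`" is a post-fixed point
of one layer of the rules. A union `τ₁ ∨ τ₂ ≤ τ₁ ∨ τ₂` is derived by (∨L), then (∨R1) or
(∨R2), then the derivation of `τᵢ ≤ τᵢ`, whose last rule is never (∨R1) or (∨R2); so no
sub-derivation consists of (∨R) rules only. -/

theorem Ty.eq_int_or_obj_or_union (t : Ty) :
    t = Ty.int ∨ (∃ c fs ch, t = Ty.obj c fs ch) ∨ ∃ a b, t = Ty.union a b := by
  rw [← PFunctor.M.mk_dest t]
  obtain ⟨_ | ⟨c, fs⟩ | _, ch⟩ := PFunctor.M.dest t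
  · exact .inl (congrArg PFunctor.M.mk (Sigma.ext rfl (heq_of_eq (funext (·.elim)))))
  · exact .inr (.inl ⟨c, fs, ch, rfl⟩)
  · refine .inr (.inr ⟨ch true, ch false, congrArg PFunctor.M.mk ?_⟩)
    exact Sigma.ext rfl (heq_of_eq (funext fun b => by cases b <;> rfl))

def Ty.EqOrDisjunct (t t' : Ty) : Prop :=
  t = t' ∨ ∃ s, t' = t.union s ∨ t' = s.union t

theorem SubStep.self_of_eqOrDisjunct (t : Ty) : SubStep Ty.EqOrDisjunct t t := by
  rcases t.eq_int_or_obj_or_union with rfl | ⟨c, fs, ch, rfl⟩ | ⟨a, b, rfl⟩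
  · exact .int
  · exact .obj subset_rfl fun _ _ => .inl rfl
  · exact .unionL (.inr ⟨b, .inl rfl⟩) (.inr ⟨a, .inr rfl⟩)

/-- Subtyping is reflexive: `τ ≤ τ` for every type `τ`. -/
theorem subty_refl (t : Ty) : Subty t t := by
  refine ⟨Ty.EqOrDisjunct, ?_, .inl rfl⟩
  rintro x y (rfl | ⟨s, rfl | rfl⟩)
  · exact .self_of_eqOrDisjunct x
  · exact .unionR1 (.self_of_eqOrDisjunct x)
  · exact .unionR2 (.self_of_eqOrDisjunct x)
end
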